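/- arXiv:1506.03760 — 3 statements merged into one kernel-verified Lean document; each statement's English description precedes it below -/
import Mathlib

section
/- Let G = (V,E) be a graph on vertices v₁,...,v_n and k a positive integer. Define sets S_{i,j} ⊆ [n]×[n] for i,j ∈ [k] by: (ℓ,r) ∈ S_{i,i} iff ℓ = r, and for i ≠ j, (ℓ,r) ∈ S_{i,j} iff {v_ℓ, v_r} ∈ E. Then G has a clique of size k if and only if there exist values s_{i,j} ∈ S_{i,j} such that entries in the same row of the k×k grid agree in their first coordinate and entries in the same column agree in their second coordinate. -/
/-!
A tiling is determined by its diagonal: row agreement fixes the first coordinate of `s i j`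
to that of `s i i`, column agreement fixes the second to that of `s j j`, and on the diagonal
both coordinates are one vertex `f i`. So `s i j = (f i, f j)`, and the off-diagonal
constraints say exactly that `f` is a clique; conversely a clique `f` gives the tiling
`(f i, f j)`.
-/

variable {ι α β V : Type*}

theorem Prod.eq_diag_of_rows_fst_of_cols_snd {s : ι → ι → α × β}
    (hrow : ∀ i j j', (s i j).1 = (s i j').1) (hcol : ∀ i i' j, (s i j).2 = (s i' j).2)
    (i j : ι) : s i j = ((s i i).1, (s j j).2) :=
  Prod.ext (hrow i j i) (hcol i j j)

theorem SimpleGraph.injective_of_adj_of_ne {G : SimpleGraph V} {f : ι → V}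
    (hadj : ∀ i j, i ≠ j → G.Adj (f i) (f j)) : Function.Injective f :=
  fun i j hij => by_contra fun hne => (hadj i j hne).ne hij

theorem stmt10_general (n k : ℕ) (G : SimpleGraph (Fin n)) :
    (∃ f : Fin k → Fin n, Function.Injective f ∧
        ∀ i j : Fin k, i ≠ j → G.Adj (f i) (f j)) ↔
      (∃ s : Fin k → Fin k → Fin n × Fin n,
        (∀ i j : Fin k,
          (i = j → (s i j).1 = (s i j).2) ∧ (i ≠ j → G.Adj (s i j).1 (s i j).2)) ∧
        (∀ i j j' : Fin k, (s i j).1 = (s i j').1) ∧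
        (∀ i i' j : Fin k, (s i j).2 = (s i' j).2)) := by
  constructor
  · rintro ⟨f, -, hadj⟩
    exact ⟨fun i j => (f i, f j), fun i j => ⟨fun h => h ▸ rfl, hadj i j⟩,
      fun _ _ _ => rfl, fun _ _ _ => rfl⟩
  · rintro ⟨s, hS, hrow, hcol⟩
    have hs : ∀ i j, s i j = ((s i i).1, (s j j).1) := fun i j => by
      rw [Prod.eq_diag_of_rows_fst_of_cols_snd hrow hcol i j, (hS j j).1 rfl]
    have hadj : ∀ i j, i ≠ j → G.Adj (s i i).1 (s j j).1 := fun i j hne => by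
      simpa only [hs i j] using (hS i j).2 hne
    exact ⟨fun i => (s i i).1, SimpleGraph.injective_of_adj_of_ne hadj, hadj⟩

/-- Marx's reduction from k-Clique to Grid Tiling: for a graph `G` on vertices
`v₁,…,v_n`, define `S_{i,j} ⊆ [n]×[n]` by `(ℓ,r) ∈ S_{i,i} ↔ ℓ = r` and, for `i ≠ j`,
`(ℓ,r) ∈ S_{i,j} ↔ {v_ℓ, v_r} ∈ E(G)`. Then `G` has a clique of size `k` iff there is
a choice `s_{i,j} ∈ S_{i,j}` such that entries in the same row agree in the first
coordinate and entries in the same column agree in the second coordinate. -/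
theorem stmt10 (n k : ℕ) (hk : 0 < k) (G : SimpleGraph (Fin n)) :
    (∃ f : Fin k → Fin n, Function.Injective f ∧
        ∀ i j : Fin k, i ≠ j → G.Adj (f i) (f j)) ↔
      (∃ s : Fin k → Fin k → Fin n × Fin n,
        (∀ i j : Fin k,
          (i = j → (s i j).1 = (s i j).2) ∧ (i ≠ j → G.Adj (s i j).1 (s i j).2)) ∧
        (∀ i j j' : Fin k, (s i j).1 = (s i j').1) ∧
        (∀ i i' j : Fin k, (s i j).2 = (s i' j).2)) :=
  stmt10_general n k G
end

section
/- Suppose a solution X to the constructed 2-SCSS-(2k-1,1) instance has weight at most β. If at least k of the 2k-1 s→t paths in X use a connector edge, then some connector edge is used by two distinct s→t paths, so the weight of X is at least W(k-1) + W = Wk > β, a contradiction. Hence at least k of the s→t paths in X use no connector edge. -/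
/-- Suppose a solution X of weight at most β to the constructed 2-SCSS-(2k-1,1)
instance is given, and `uses p` records a connector edge used by the s→t path `p`
(`none` if `p` uses no connector edge; there are k-1 connector edges). If two distinct
s→t paths used the same connector edge then — since the t→s path already uses all k-1
connector edges, each of weight W, and every use must be paid — the weight of X would
be at least W(k-1) + W = Wk > β, a contradiction. Hence at least k of the 2k-1 s→t
paths use no connector edge. -/
theorem stmt13 (k n : ℕ) (hk : 0 < k) (hkn : k ≤ n)
    (Δ W α β weight : ℤ)
    (hΔ : Δ = 7 * (n : ℤ) ^ 6) (hW : W = 53 * (n : ℤ) ^ 9)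
    (hα : α = Δ * ((n : ℤ) * k + 1) + 4 * ((k : ℤ) + 1) + 4 * k * ((n : ℤ) - 1))
    (hβ : β = 2 * k * α + W * ((k : ℤ) - 1) - ((k : ℤ) ^ 2 + k))
    (uses : Fin (2 * k - 1) → Option (Fin (k - 1)))
    (hdup : ∀ p q : Fin (2 * k - 1), p ≠ q → ∀ c : Fin (k - 1),
      uses p = some c → uses q = some c → W * ((k : ℤ) - 1) + W ≤ weight)
    (hwβ : weight ≤ β) :
    k ≤ (Finset.univ.filter (fun p => uses p = none)).card := by
  by_contra h
  push_neg at h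
  -- the set of paths using some connector
  set S := Finset.univ.filter (fun p => uses p = none) with hS
  set T := Finset.univ.filter (fun p => ¬ uses p = none) with hT
  have hsum : S.card + T.card = 2 * k - 1 := by
    rw [hS, hT, Finset.card_filter_add_card_filter_not]
    simp
  have hTcard : k - 1 < T.card := by omega
  -- pigeonhole: map each p ∈ T to uses p ∈ image some univ
  have hmaps : ∀ p ∈ T, uses p ∈ (Finset.univ : Finset (Fin (k-1))).image some := by
    intro p hp
    rw [hT, Finset.mem_filter] at hp
    obtain ⟨c, hc⟩ := Option.ne_none_iff_exists'.mp hp.2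
    simp [hc]
  have hcardt : ((Finset.univ : Finset (Fin (k-1))).image some).card < T.card := by
    rw [Finset.card_image_of_injective _ (Option.some_injective _)]
    simpa using hTcard
  obtain ⟨p, hp, q, hq, hpq, heq⟩ :=
    Finset.exists_ne_map_eq_of_card_lt_of_maps_to hcardt hmaps
  rw [hT, Finset.mem_filter] at hp
  obtain ⟨c, hc⟩ := Option.ne_none_iff_exists'.mp hp.2
  have hqc : uses q = some c := by rw [← heq, hc]
  have hw : W * ((k : ℤ) - 1) + W ≤ weight := hdup p q hpq c hc hqc
  -- numeric contradiction
  have hk1 : (1 : ℤ) ≤ (k : ℤ) := by exact_mod_cast hk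
  have hkn' : (k : ℤ) ≤ (n : ℤ) := by exact_mod_cast hkn
  have hn1 : (1 : ℤ) ≤ (n : ℤ) := le_trans hk1 hkn'
  subst hβ hα hΔ hW
  nlinarith [sq_nonneg ((n:ℤ) - k), pow_pos (lt_of_lt_of_le one_pos hn1) 6,
    pow_pos (lt_of_lt_of_le one_pos hn1) 7, pow_pos (lt_of_lt_of_le one_pos hn1) 9,
    mul_le_mul_of_nonneg_left hkn' (by positivity : (0:ℤ) ≤ (n:ℤ)^7 * k),
    mul_le_mul_of_nonneg_left hkn' (by positivity : (0:ℤ) ≤ (n:ℤ)^6),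
    mul_le_mul_of_nonneg_left hkn' (by positivity : (0:ℤ) ≤ (n:ℤ) * k),
    mul_le_mul_of_nonneg_left hkn' (by positivity : (0:ℤ) ≤ (n:ℤ)),
    pow_le_pow_right₀ hn1 (by norm_num : 7 ≤ 9),
    pow_le_pow_right₀ hn1 (by norm_num : 8 ≤ 9),
    pow_le_pow_right₀ hn1 (by norm_num : 2 ≤ 9),
    pow_le_pow_right₀ hn1 (by norm_num : 3 ≤ 9),
    pow_le_pow_right₀ hn1 (by norm_num : 1 ≤ 9)]
end

section
/- Let k, n, Δ, W, α, β be as in the hardness reduction with k ≤ n, Δ = 7n^6, W = 53n^9. If a solution X of the 2-SCSS-(2k-1,1) instance has blue-edge weight at least 2kΔ(nk+1) + Δ(nk+1), black-edge weight at least 2k(4(k+1)+4k(n-1)) - 6n^6, and connector-edge weight W(k-1), then the weight of X exceeds β. Hence X contains exactly k expensive paths. -/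
/-- If a solution X of the 2-SCSS-(2k-1,1) reduction instance has blue-edge weight at
least 2kΔ(nk+1) + Δ(nk+1) (as it would if it contained more than k expensive paths),
black-edge weight at least 2k(4(k+1)+4k(n-1)) - 6n⁶ (the maximum shortcut saving
being 6n⁶) and connector-edge weight W(k-1), then its weight exceeds β. Hence a
solution of weight at most β contains exactly k expensive paths: given that the number
e of expensive paths satisfies e ≥ k, and that e > k forces the above lower bound on
the weight, weight ≤ β implies e = k. -/
theorem stmt15 (k n : ℤ) (hk : 0 < k) (hn : 0 < n) (hkn : k ≤ n)
    (Δ W α β : ℤ)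
    (hΔ : Δ = 7 * n ^ 6) (hW : W = 53 * n ^ 9)
    (hα : α = Δ * (n * k + 1) + 4 * (k + 1) + 4 * k * (n - 1))
    (hβ : β = 2 * k * α + W * (k - 1) - (k ^ 2 + k))
    (blue black conn weight e : ℤ)
    (hconn : conn = W * (k - 1))
    (he : k ≤ e)
    (hbounds : k < e →
      (2 * k * (Δ * (n * k + 1)) + Δ * (n * k + 1) ≤ blue ∧
       2 * k * (4 * (k + 1) + 4 * k * (n - 1)) - 6 * n ^ 6 ≤ black ∧
       blue + black + conn ≤ weight))
    (hwβ : weight ≤ β) :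
    (β < 2 * k * (Δ * (n * k + 1)) + Δ * (n * k + 1)
        + (2 * k * (4 * (k + 1) + 4 * k * (n - 1)) - 6 * n ^ 6) + W * (k - 1)) ∧
    e = k := by
  subst hΔ hW hα hβ hconn
  have hβlt : 2 * k * ((7*n^6) * (n * k + 1) + 4 * (k + 1) + 4 * k * (n - 1)) + 53*n^9 * (k - 1) - (k ^ 2 + k) < 2 * k * ((7*n^6) * (n * k + 1)) + (7*n^6) * (n * k + 1)
        + (2 * k * (4 * (k + 1) + 4 * k * (n - 1)) - 6 * n ^ 6) + 53*n^9 * (k - 1) := by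
    nlinarith [pow_pos hn 6, sq_nonneg k, mul_pos hn hk, sq_nonneg n, pow_pos hn 7]
  refine ⟨hβlt, ?_⟩
  by_contra h
  have hlt : k < e := lt_of_le_of_ne he (fun h2 => h h2.symm)
  obtain ⟨h1, h2, h3⟩ := hbounds hlt
  linarith
end
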